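/- Fix 1 ≤ α < ∞. Every λ ∈ E which is not an eigenvalue of the transition operator S acting on l^α belongs to the approximate point spectrum of S on l^α: there exists a sequence of vectors u_k ∈ l^α with ‖u_k‖_α = 1 such that ‖S u_k − λ u_k‖_α → 0 as k → ∞. -/

import Mathlib

/-!
The formal vector `v_λ(n) = ∏_r ι_λ(r) ^ a_r(n)` solves `S v = λ v` row by row. It is
multiplicative along Cantor digits, `v(b + a) = v(b) v(a)` when `a < q_z ∣ b`, so the row of `n`
is a multiple of the row of `q_z - 1`, where `z + 1 = ζ_n`; in that row the identity follows by
induction on `z` from `ι_λ(r) ^ d_r = f̃_r(λ) = (1 - p_{r+1}) + p_{r+1} ι_λ(r+1)`.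

Since `λ` is not an eigenvalue and `v(0) = 1`, `v ∉ l^α`, so the truncations `w_k` of `v` to
`[0, q_k)` have norms tending to infinity. The defect `S w_k - λ w_k` vanishes below `q_k - 1`,
equals `-p_1 ⋯ p_{k+1} ι_λ(k+1) = -p_1 ⋯ p_k (f̃_k(λ) - 1 + p_{k+1})` at `q_k - 1`, which is
bounded because `λ ∈ E`, and coincides with the column `S e_0` beyond `q_k`. So the defects are
bounded in `l^α`, and the `w_k / ‖w_k‖` are approximate eigenvectors.
-/

open Filter Finset
open scoped ENNReal Topology ZeroAtInfty

noncomputable section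

namespace AMFC

/-- `q d j = d 0 * d 1 * ... * d j`. -/
def q (d : ℕ → ℕ) (j : ℕ) : ℕ := ∏ i ∈ Finset.range (j + 1), d i

/-- For `j ≥ 1`, `digit d n j = ⌊n / q_{j-1}⌋ mod d_j` is the `j`-th digit of `n`
in the Cantor system of numeration. -/
def digit (d : ℕ → ℕ) (n j : ℕ) : ℕ := (n / q d (j - 1)) % d j

/-- The counter `ζ_n = min { j ≥ 1 : a_j(n) ≠ d_j - 1 }`. -/
def zeta (d : ℕ → ℕ) (n : ℕ) : ℕ := sInf {j | 1 ≤ j ∧ digit d n j ≠ d j - 1}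

open scoped Classical in
/-- The transition probabilities of the stochastic adding machine. -/
def s (d : ℕ → ℕ) (p : ℕ → ℝ) (n m : ℕ) : ℝ :=
  if m = n + 1 then ∏ j ∈ Finset.Icc 1 (zeta d n), p j
  else if m = n then 1 - p 1
  else if h : ∃ r, 1 ≤ r ∧ r + 1 ≤ zeta d n ∧
      n = m + ∑ j ∈ Finset.Icc 1 r, (d j - 1) * q d (j - 1)
    then (1 - p (h.choose + 1)) * ∏ j ∈ Finset.Icc 1 h.choose, p j
  else 0

/-- `f j (z) = ((z - (1 - p j)) / p j) ^ (d j)`. -/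
def f (d : ℕ → ℕ) (p : ℕ → ℝ) (j : ℕ) (z : ℂ) : ℂ :=
  ((z - (1 - (p j : ℂ))) / (p j : ℂ)) ^ d j

/-- `ftil j = f j ∘ ... ∘ f 1`, with `ftil 0 = id`. -/
def ftil (d : ℕ → ℕ) (p : ℕ → ℝ) : ℕ → ℂ → ℂ
  | 0 => id
  | j + 1 => f d p (j + 1) ∘ ftil d p j

/-- The fibered filled Julia set `E = {z : limsup_j |ftil j z| < ∞}`. -/
def E (d : ℕ → ℕ) (p : ℕ → ℝ) : Set ℂ :=
  {z | Filter.limsup (fun j => (‖ftil d p j z‖₊ : ℝ≥0∞)) Filter.atTop < ⊤}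

/-- `ι_λ(r) = (ftil (r-1) λ - (1 - p r)) / p r` for `r ≥ 1`. -/
def iota (d : ℕ → ℕ) (p : ℕ → ℝ) (lam : ℂ) (r : ℕ) : ℂ :=
  (ftil d p (r - 1) lam - (1 - (p r : ℂ))) / (p r : ℂ)

/-- `v_λ(n) = ∏_{r ≥ 1} ι_λ(r) ^ a_r(n)`, a finite product. -/
def vlam (d : ℕ → ℕ) (p : ℕ → ℝ) (lam : ℂ) (n : ℕ) : ℂ :=
  ∏ᶠ r : ℕ, iota d p lam (r + 1) ^ digit d n (r + 1)

/-- The point spectrum of a continuous linear operator. -/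
def pointSpectrum {M : Type*} [NormedAddCommGroup M] [NormedSpace ℂ M]
    (T : M →L[ℂ] M) : Set ℂ :=
  {lam | ∃ v, v ≠ 0 ∧ T v = lam • v}

/-- The residual spectrum: `T - λI` is injective but its range is not dense. -/
def residualSpectrum {M : Type*} [NormedAddCommGroup M] [NormedSpace ℂ M]
    (T : M →L[ℂ] M) : Set ℂ :=
  {lam | Function.Injective ⇑(T - lam • (1 : M →L[ℂ] M)) ∧
    ¬ DenseRange ⇑(T - lam • (1 : M →L[ℂ] M))}

/-- The continuous spectrum: `T - λI` is injective with dense range, but not surjective. -/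
def continuousSpectrum {M : Type*} [NormedAddCommGroup M] [NormedSpace ℂ M]
    (T : M →L[ℂ] M) : Set ℂ :=
  {lam | Function.Injective ⇑(T - lam • (1 : M →L[ℂ] M)) ∧
    DenseRange ⇑(T - lam • (1 : M →L[ℂ] M)) ∧
    Set.range ⇑(T - lam • (1 : M →L[ℂ] M)) ≠ Set.univ}

section Analysis

lemma exists_forall_norm_le_of_limsup_lt_top {E : Type*} [SeminormedAddCommGroup E] {u : ℕ → E}
    (h : limsup (fun j => (‖u j‖₊ : ℝ≥0∞)) atTop < ⊤) : ∃ M, ∀ j, ‖u j‖ ≤ M := by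
  obtain ⟨b, hb, hbtop⟩ := exists_between h
  have hev : ∀ᶠ j in atTop, ‖u j‖ ≤ b.toReal :=
    (eventually_lt_of_limsup_lt hb).mono fun j hj => by
      simpa using ENNReal.toReal_mono hbtop.ne hj.le
  obtain ⟨M, hM⟩ := (isBoundedUnder_of_eventually_le hev).bddAbove_range
  exact ⟨M, fun j => hM ⟨j, rfl⟩⟩

lemma tendsto_norm_sum_single_atTop {E : Type*} [NormedAddCommGroup E] {p : ℝ≥0∞}
    [Fact (1 ≤ p)] (hp : p ≠ ⊤) {f : ℕ → E} (hf : ¬ Memℓp f p) :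
    Tendsto (fun N => ‖∑ i ∈ range N, lp.single (E := fun _ => E) p i (f i)‖) atTop atTop := by
  have hp0 : 0 < p.toReal := ENNReal.toReal_pos (zero_lt_one.trans_le Fact.out).ne' hp
  have hsum : Tendsto (fun N => ∑ i ∈ range N, ‖f i‖ ^ p.toReal) atTop atTop :=
    (not_summable_iff_tendsto_nat_atTop_of_nonneg fun i => by positivity).1
      fun h => hf (memℓp_gen h)
  refine ((tendsto_rpow_atTop (inv_pos.2 hp0)).comp hsum).congr fun N => ?_
  rw [Function.comp_apply, ← lp.norm_sum_single hp0, Real.rpow_rpow_inv (norm_nonneg _) hp0.ne']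

lemma exists_norm_eq_one_tendsto_norm_sub_smul {𝕜 E : Type*} [RCLike 𝕜] [NormedAddCommGroup E]
    [NormedSpace 𝕜 E] (T : E →L[𝕜] E) (lam : 𝕜) {w : ℕ → E} {C : ℝ}
    (hw : Tendsto (fun k => ‖w k‖) atTop atTop) (hC : ∀ k, ‖T (w k) - lam • w k‖ ≤ C) :
    ∃ u : ℕ → E, (∀ k, ‖u k‖ = 1) ∧ Tendsto (fun k => ‖T (u k) - lam • u k‖) atTop (𝓝 0) := by
  obtain ⟨K, hK⟩ := eventually_atTop.1 (hw.eventually_gt_atTop 0)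
  have hw0 : ∀ k, w (k + K) ≠ 0 := fun k => norm_pos_iff.1 (hK _ (by omega))
  refine ⟨fun k => (‖w (k + K)‖ : 𝕜)⁻¹ • w (k + K), fun k => norm_smul_inv_norm (hw0 k), ?_⟩
  have hdecay : Tendsto (fun k => ‖w (k + K)‖⁻¹ * C) atTop (𝓝 0) := by
    simpa using ((tendsto_add_atTop_iff_nat K).2 hw).inv_tendsto_atTop.mul_const C
  refine squeeze_zero (fun _ => norm_nonneg _) (fun k => ?_) hdecay
  rw [map_smul, smul_comm lam, ← smul_sub, norm_smul, norm_inv, RCLike.norm_ofReal, abs_norm]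
  exact mul_le_mul_of_nonneg_left (hC _) (inv_nonneg.2 (norm_nonneg _))

end Analysis

structure IsCantorBase (d : ℕ → ℕ) : Prop where
  zero_eq : d 0 = 1
  two_le : ∀ j, 1 ≤ j → 2 ≤ d j

section Numeration

variable {d : ℕ → ℕ}

lemma q_succ (d : ℕ → ℕ) (j : ℕ) : q d (j + 1) = q d j * d (j + 1) :=
  Finset.prod_range_succ _ _

lemma q_dvd_q {i j : ℕ} (h : i ≤ j) : q d i ∣ q d j :=
  Finset.prod_dvd_prod_of_subset _ _ _ (Finset.range_subset_range.2 (by omega))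

lemma digit_succ (n r : ℕ) : digit d n (r + 1) = n / q d r % d (r + 1) := rfl

lemma mod_q_succ (n r : ℕ) : n % q d (r + 1) = q d r * digit d n (r + 1) + n % q d r := by
  rw [q_succ, digit_succ, Nat.mod_mul_right_div_self n (q d r) (d (r + 1)) |>.symm,
    ← Nat.mod_mod_of_dvd n (Dvd.intro _ rfl : q d r ∣ q d r * d (r + 1)), Nat.div_add_mod]

lemma digit_eq_zero_of_lt {n r : ℕ} (h : n < q d r) : digit d n (r + 1) = 0 := by
  simp [digit_succ, Nat.div_eq_of_lt h]

lemma mul_q_add_lt {e z a : ℕ} (he : e < d (z + 1)) (ha : a < q d z) :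
    e * q d z + a < q d (z + 1) := by
  have := Nat.mul_le_mul_right (q d z) (Nat.succ_le_of_lt he)
  rw [Nat.succ_mul] at this
  rw [q_succ, mul_comm (q d z)]
  omega

namespace IsCantorBase

variable (hd : IsCantorBase d)
include hd

lemma q_zero : q d 0 = 1 := by simp [q, hd.zero_eq]

lemma q_pos (j : ℕ) : 0 < q d j := by
  induction j with
  | zero => simp [hd.q_zero]
  | succ j ih => rw [q_succ]; exact Nat.mul_pos ih (by linarith [hd.two_le (j + 1) (by omega)])

lemma q_strictMono : StrictMono (q d) := strictMono_nat_of_lt_succ fun j => by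
  rw [q_succ]
  exact lt_mul_of_one_lt_right (hd.q_pos j) (hd.two_le (j + 1) (by omega))

lemma self_lt_q (j : ℕ) : j < q d j := by
  induction j with
  | zero => exact hd.q_pos 0
  | succ j ih => have := hd.q_strictMono (show j < j + 1 by omega); omega

lemma one_lt_q {r : ℕ} (hr : 1 ≤ r) : 1 < q d r :=
  hd.q_zero ▸ hd.q_strictMono (by omega)

lemma digit_lt (n r : ℕ) : digit d n (r + 1) < d (r + 1) :=
  Nat.mod_lt _ (by linarith [hd.two_le (r + 1) (by omega)])

lemma digit_eq_zero_of_dvd {n r k : ℕ} (hrk : r < k) (h : q d k ∣ n) : digit d n (r + 1) = 0 := by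
  obtain ⟨t, rfl⟩ := (q_dvd_q hrk).trans h
  rw [digit_succ, q_succ, mul_assoc, Nat.mul_div_cancel_left _ (hd.q_pos r), Nat.mul_mod_right]

lemma digit_add {a b z : ℕ} (ha : a < q d z) (hb : q d z ∣ b) (r : ℕ) :
    digit d (b + a) (r + 1) = digit d b (r + 1) + digit d a (r + 1) := by
  rcases lt_or_ge r z with hrz | hzr
  · rw [hd.digit_eq_zero_of_dvd hrz hb, zero_add, digit_succ, digit_succ,
      Nat.add_div_of_dvd_right ((q_dvd_q hrz.le).trans hb)]
    obtain ⟨t, rfl⟩ := (q_dvd_q hrz).trans hb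
    rw [q_succ, mul_assoc, Nat.mul_div_cancel_left _ (hd.q_pos r), Nat.mul_add_mod]
  · rw [digit_eq_zero_of_lt (ha.trans_le (hd.q_strictMono.monotone hzr)), add_zero,
      digit_succ, digit_succ]
    obtain ⟨c, hc⟩ := q_dvd_q (d := d) hzr
    rw [hc, ← Nat.div_div_eq_div_mul, ← Nat.div_div_eq_div_mul, Nat.add_div_of_dvd_right hb,
      Nat.div_eq_of_lt ha, add_zero]

lemma mod_q_eq_sub_one_iff (n k : ℕ) :
    n % q d k = q d k - 1 ↔ ∀ r < k, digit d n (r + 1) = d (r + 1) - 1 := by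
  induction k with
  | zero => simp [hd.q_zero, Nat.mod_one]
  | succ k ih =>
    rw [Nat.forall_lt_succ_right, ← ih, mod_q_succ, q_succ]
    have hQ := hd.q_pos k
    have hm : n % q d k < q d k := Nat.mod_lt _ hQ
    have hle : q d k * digit d n (k + 1) + q d k ≤ q d k * d (k + 1) := by
      rw [← Nat.mul_add_one]
      exact Nat.mul_le_mul_left _ (hd.digit_lt n k)
    have hD : q d k * (d (k + 1) - 1) + q d k = q d k * d (k + 1) := by
      rw [← Nat.mul_add_one, Nat.sub_add_cancel (by linarith [hd.two_le (k + 1) (by omega)])]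
    constructor
    · intro h
      have : q d k * (digit d n (k + 1) + 1) = q d k * d (k + 1) := by
        rw [Nat.mul_add_one]; omega
      have := Nat.eq_of_mul_eq_mul_left hQ this
      omega
    · rintro ⟨hm', hdig⟩
      rw [hm', hdig]
      omega

lemma zeta_mem (n : ℕ) : zeta d n ∈ {j | 1 ≤ j ∧ digit d n j ≠ d j - 1} := by
  refine Nat.sInf_mem ⟨n + 1, by omega, ?_⟩
  rw [digit_eq_zero_of_lt (hd.self_lt_q n)]
  have := hd.two_le (n + 1) (by omega)
  omega

lemma zeta_eq_succ_iff (n z : ℕ) :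
    zeta d n = z + 1 ↔ n % q d z = q d z - 1 ∧ digit d n (z + 1) ≠ d (z + 1) - 1 := by
  rw [hd.mod_q_eq_sub_one_iff]
  obtain ⟨hpos, hne⟩ := hd.zeta_mem n
  constructor
  · intro h
    refine ⟨fun r hr => ?_, h ▸ hne⟩
    by_contra hr'
    exact Nat.notMem_of_lt_sInf (show r + 1 < zeta d n by omega) ⟨by omega, hr'⟩
  · rintro ⟨hmax, hz⟩
    refine le_antisymm (Nat.sInf_le ⟨by omega, hz⟩) (Nat.not_lt.1 fun hlt => ?_)
    obtain ⟨r, hr⟩ : ∃ r, zeta d n = r + 1 := ⟨zeta d n - 1, by omega⟩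
    exact hne (hr ▸ hmax r (by omega))

lemma mod_q_of_lt_zeta {n r : ℕ} (hr : r < zeta d n) : n % q d r = q d r - 1 := by
  obtain ⟨z, hz⟩ : ∃ z, zeta d n = z + 1 := ⟨zeta d n - 1, by have := (hd.zeta_mem n).1; omega⟩
  have hmax := ((hd.zeta_eq_succ_iff n z).1 hz).1
  rw [hd.mod_q_eq_sub_one_iff] at hmax ⊢
  exact fun r' hr' => hmax r' (by omega)

lemma zeta_q_sub_one (k : ℕ) : zeta d (q d k - 1) = k + 1 := by
  have hlt : q d k - 1 < q d k := Nat.sub_lt (hd.q_pos k) one_pos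
  rw [hd.zeta_eq_succ_iff, Nat.mod_eq_of_lt hlt, digit_eq_zero_of_lt hlt]
  have := hd.two_le (k + 1) (by omega)
  omega

lemma sum_Icc_sub_one_mul_q (r : ℕ) :
    ∑ j ∈ Icc 1 r, (d j - 1) * q d (j - 1) = q d r - 1 := by
  induction r with
  | zero => simp [hd.q_zero]
  | succ r ih =>
    rw [Finset.sum_Icc_succ_top (by omega), ih, Nat.add_sub_cancel, q_succ, Nat.sub_one_mul,
      mul_comm (d (r + 1))]
    have := hd.q_pos r
    have : q d r ≤ q d r * d (r + 1) :=
      Nat.le_mul_of_pos_right _ (by linarith [hd.two_le (r + 1) (by omega)])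
    omega

end IsCantorBase

end Numeration

section TransitionMatrix

variable {d : ℕ → ℕ} (p : ℕ → ℝ)

lemma s_succ (n : ℕ) : s d p n (n + 1) = ∏ j ∈ Icc 1 (zeta d n), p j := by
  unfold s; rw [if_pos rfl]

lemma s_self (n : ℕ) : s d p n n = 1 - p 1 := by
  unfold s; rw [if_neg (by omega), if_pos rfl]

namespace IsCantorBase

variable (hd : IsCantorBase d)
include hd

lemma s_sub_q_sub_one {n r : ℕ} (hr : 1 ≤ r) (hrn : r < zeta d n) :
    s d p n (n - (q d r - 1)) = (1 - p (r + 1)) * ∏ j ∈ Icc 1 r, p j := by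
  have hle : q d r - 1 ≤ n := hd.mod_q_of_lt_zeta hrn ▸ Nat.mod_le n (q d r)
  have hq := hd.one_lt_q hr
  have hex : ∃ r', 1 ≤ r' ∧ r' + 1 ≤ zeta d n ∧
      n = n - (q d r - 1) + ∑ j ∈ Icc 1 r', (d j - 1) * q d (j - 1) :=
    ⟨r, hr, hrn, by rw [hd.sum_Icc_sub_one_mul_q]; omega⟩
  unfold s
  rw [if_neg (by omega), if_neg (by omega), dif_pos hex]
  obtain ⟨-, -, hchoose⟩ := hex.choose_spec
  rw [hd.sum_Icc_sub_one_mul_q] at hchoose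
  have := hd.q_pos hex.choose
  rw [hd.q_strictMono.injective (show q d hex.choose = q d r by omega)]

lemma s_eq_zero {n m : ℕ} (h1 : m ≠ n + 1) (h2 : m ≠ n)
    (h3 : ∀ r, 1 ≤ r → r < zeta d n → n ≠ m + (q d r - 1)) : s d p n m = 0 := by
  unfold s
  rw [if_neg h1, if_neg h2, dif_neg]
  rintro ⟨r, hr, hrn, hn⟩
  exact h3 r hr hrn (hd.sum_Icc_sub_one_mul_q r ▸ hn)

lemma s_eq_zero_of_succ_lt {n m : ℕ} (h : n + 1 < m) : s d p n m = 0 :=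
  hd.s_eq_zero p (by omega) (by omega) fun _ _ _ _ => by omega

lemma s_eq_zero_of_lt_q {n m k : ℕ} (hm0 : 0 < m) (hmk : m < q d k) (hkn : q d k ≤ n) :
    s d p n m = 0 := by
  refine hd.s_eq_zero p (by omega) (by omega) fun r _ hrn hn => ?_
  have hdiv := Nat.div_add_mod n (q d r)
  rw [hd.mod_q_of_lt_zeta hrn] at hdiv
  have hr := hd.q_pos r
  rcases le_or_gt k r with hkr | hrk
  · have := hd.q_strictMono.monotone hkr
    have : q d r ≤ q d r * (n / q d r) :=
      Nat.le_mul_of_pos_right _ (Nat.pos_of_ne_zero fun h => by rw [h] at hdiv; omega)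
    omega
  · obtain ⟨c, hc⟩ := q_dvd_q (d := d) hrk.le
    have : n / q d r < c := Nat.lt_of_mul_lt_mul_left (a := q d r) (by omega)
    have := Nat.mul_le_mul_left (q d r) this
    rw [Nat.mul_add_one] at this
    omega

lemma tsum_s_mul_eq_sum_range (w : ℕ → ℂ) (n : ℕ) :
    ∑' m, (s d p n m : ℂ) * w m = ∑ m ∈ range (n + 2), (s d p n m : ℂ) * w m :=
  tsum_eq_sum fun m hm => by
    rw [hd.s_eq_zero_of_succ_lt p (by simp at hm; omega), Complex.ofReal_zero, zero_mul]

lemma tsum_s_mul (w : ℕ → ℂ) (n : ℕ) :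
    ∑' m, (s d p n m : ℂ) * w m
      = (∏ j ∈ Icc 1 (zeta d n), (p j : ℂ)) * w (n + 1) + (1 - (p 1 : ℂ)) * w n
        + ∑ r ∈ Ico 1 (zeta d n),
            (1 - (p (r + 1) : ℂ)) * (∏ j ∈ Icc 1 r, (p j : ℂ)) * w (n - (q d r - 1)) := by
  have hjump : ∀ r ∈ Ico 1 (zeta d n), q d r - 1 ≤ n ∧ 1 < q d r := fun r hr => by
    rw [Finset.mem_Ico] at hr
    exact ⟨hd.mod_q_of_lt_zeta hr.2 ▸ Nat.mod_le n (q d r), hd.one_lt_q hr.1⟩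
  have hinj : Set.InjOn (fun r => n - (q d r - 1)) (Ico 1 (zeta d n)) := fun r hr r' hr' h => by
    have := hjump r hr; have := hjump r' hr'
    exact hd.q_strictMono.injective (by simp only at h; omega)
  set T := (Ico 1 (zeta d n)).image fun r => n - (q d r - 1)
  have hnT : n ∉ T := by
    simp only [T, Finset.mem_image, not_exists, not_and]
    intro r hr; have := hjump r hr; omega
  have hn1T : n + 1 ∉ insert n T := by
    simp only [T, Finset.mem_insert, Finset.mem_image, not_or, not_exists, not_and]
    exact ⟨by omega, fun r hr => by have := hjump r hr; omega⟩
  rw [tsum_eq_sum (s := insert (n + 1) (insert n T)), Finset.sum_insert hn1T,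
    Finset.sum_insert hnT, Finset.sum_image hinj]
  · rw [s_succ, s_self, Finset.sum_congr rfl fun r hr => by
      rw [hd.s_sub_q_sub_one p (Finset.mem_Ico.1 hr).1 (Finset.mem_Ico.1 hr).2]]
    push_cast
    ring
  · intro m hm
    simp only [T, Finset.mem_insert, Finset.mem_image, Finset.mem_Ico, not_or, not_exists,
      not_and] at hm
    rw [hd.s_eq_zero p hm.1 hm.2.1 fun r hr hrn h => hm.2.2 r ⟨hr, hrn⟩ (by omega),
      Complex.ofReal_zero, zero_mul]

end IsCantorBase

end TransitionMatrix

section Eigenvector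

variable {d : ℕ → ℕ} {p : ℕ → ℝ} (lam : ℂ)

lemma vlam_zero : vlam d p lam 0 = 1 := by
  simp [vlam, digit]

lemma ftil_eq {j : ℕ} (hpj : p (j + 1) ≠ 0) :
    ftil d p j lam = (1 - (p (j + 1) : ℂ)) + p (j + 1) * iota d p lam (j + 1) := by
  have : (p (j + 1) : ℂ) ≠ 0 := Complex.ofReal_ne_zero.2 hpj
  rw [iota, Nat.add_sub_cancel]
  field_simp
  ring

lemma norm_prod_mul_iota_le (hp : ∀ j, 1 ≤ j → p j ∈ Set.Ioc (0 : ℝ) 1) (k : ℕ) :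
    ‖(∏ j ∈ Icc 1 (k + 1), (p j : ℂ)) * iota d p lam (k + 1)‖ ≤ ‖ftil d p k lam‖ + 1 := by
  have hprod : ‖∏ j ∈ Icc 1 k, (p j : ℂ)‖ ≤ 1 := by
    rw [norm_prod]
    refine Finset.prod_le_one (fun _ _ => norm_nonneg _) fun j hj => ?_
    obtain ⟨h0, h1⟩ := hp j (Finset.mem_Icc.1 hj).1
    rwa [Complex.norm_real, Real.norm_of_nonneg h0.le]
  obtain ⟨h0, h1⟩ := hp (k + 1) (by omega)
  have hsub : ‖1 - (p (k + 1) : ℂ)‖ ≤ 1 := by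
    rw [← Complex.ofReal_one, ← Complex.ofReal_sub, Complex.norm_real,
      Real.norm_of_nonneg (by linarith)]
    linarith
  rw [Finset.prod_Icc_succ_top (by omega), mul_assoc,
    show (p (k + 1) : ℂ) * iota d p lam (k + 1) = ftil d p k lam - (1 - (p (k + 1) : ℂ)) by
      rw [ftil_eq lam h0.ne']; ring, norm_mul]
  calc ‖∏ j ∈ Icc 1 k, (p j : ℂ)‖ * ‖ftil d p k lam - (1 - (p (k + 1) : ℂ))‖
      ≤ 1 * (‖ftil d p k lam‖ + ‖1 - (p (k + 1) : ℂ)‖) :=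
        mul_le_mul hprod (norm_sub_le _ _) (norm_nonneg _) zero_le_one
    _ ≤ ‖ftil d p k lam‖ + 1 := by linarith

namespace IsCantorBase

variable (hd : IsCantorBase d)
include hd

lemma hasFiniteMulSupport_pow_digit {M : Type*} [Monoid M] (x : ℕ → M) (n : ℕ) :
    Function.HasFiniteMulSupport fun r => x r ^ digit d n (r + 1) := by
  refine (Set.finite_Iio n).subset fun r hr => ?_
  by_contra hnr
  exact hr (by simp only [digit_eq_zero_of_lt ((hd.self_lt_q n).trans_le
    (hd.q_strictMono.monotone (not_lt.1 hnr))), pow_zero])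

lemma vlam_add {a b z : ℕ} (ha : a < q d z) (hb : q d z ∣ b) :
    vlam d p lam (b + a) = vlam d p lam b * vlam d p lam a := by
  simp only [vlam, hd.digit_add ha hb, pow_add]
  exact finprod_mul_distrib (hd.hasFiniteMulSupport_pow_digit _ b)
    (hd.hasFiniteMulSupport_pow_digit _ a)

lemma vlam_mul_q_add {e z a : ℕ} (he : e < d (z + 1)) (ha : a < q d z) :
    vlam d p lam (e * q d z + a) = iota d p lam (z + 1) ^ e * vlam d p lam a := by
  rw [hd.vlam_add lam ha (dvd_mul_left _ _), vlam, finprod_eq_single _ z]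
  · rw [digit_succ, Nat.mul_div_cancel _ (hd.q_pos z), Nat.mod_eq_of_lt he]
  · intro r hr
    rcases lt_or_gt_of_ne hr with hrz | hzr
    · rw [hd.digit_eq_zero_of_dvd hrz (dvd_mul_left _ _), pow_zero]
    · have := (mul_q_add_lt he (hd.q_pos z)).trans_le (hd.q_strictMono.monotone hzr)
      rw [add_zero] at this
      rw [digit_eq_zero_of_lt this, pow_zero]

variable (hp : ∀ j, 1 ≤ j → p j ∈ Set.Ioc (0 : ℝ) 1)
include hp

lemma lam_mul_vlam_q_sub_one (z : ℕ) :
    lam * vlam d p lam (q d z - 1)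
      = (∏ j ∈ Icc 1 (z + 1), (p j : ℂ)) * iota d p lam (z + 1)
        + (1 - (p 1 : ℂ)) * vlam d p lam (q d z - 1)
        + ∑ r ∈ Ico 1 (z + 1),
            (1 - (p (r + 1) : ℂ)) * (∏ j ∈ Icc 1 r, (p j : ℂ)) * vlam d p lam (q d z - q d r) := by
  induction z with
  | zero =>
    simp only [hd.q_zero, Nat.sub_self, vlam_zero, zero_add, Finset.Icc_self,
      Finset.prod_singleton, Finset.Ico_self, Finset.sum_empty, add_zero]
    have h0 := ftil_eq (d := d) (j := 0) lam (hp 1 le_rfl).1.ne'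
    rw [show ftil d p 0 lam = lam from rfl] at h0
    linear_combination h0
  | succ z ih =>
    have hD := hd.two_le (z + 1) (by omega)
    set X := iota d p lam (z + 1) ^ (d (z + 1) - 1)
    have hshift : ∀ r ≤ z,
        vlam d p lam (q d (z + 1) - q d r) = X * vlam d p lam (q d z - q d r) := fun r hr => by
      have := hd.q_pos r
      have := hd.q_strictMono.monotone hr
      have hq : q d (z + 1) = (d (z + 1) - 1) * q d z + q d z := by
        rw [q_succ, Nat.sub_one_mul, mul_comm]
        have : q d z ≤ d (z + 1) * q d z := Nat.le_mul_of_pos_left _ (by omega)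
        omega
      rw [← hd.vlam_mul_q_add lam (by omega) (by omega : q d z - q d r < q d z)]
      congr 1
      omega
    have hX : iota d p lam (z + 1) * X
        = (1 - (p (z + 2) : ℂ)) + p (z + 2) * iota d p lam (z + 2) := by
      rw [← pow_succ', Nat.sub_add_cancel (by omega)]
      exact ftil_eq lam (hp (z + 2) (by omega)).1.ne'
    have hsum : ∑ r ∈ Ico 1 (z + 1), (1 - (p (r + 1) : ℂ)) * (∏ j ∈ Icc 1 r, (p j : ℂ))
          * vlam d p lam (q d (z + 1) - q d r)
        = X * ∑ r ∈ Ico 1 (z + 1), (1 - (p (r + 1) : ℂ)) * (∏ j ∈ Icc 1 r, (p j : ℂ))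
          * vlam d p lam (q d z - q d r) := by
      rw [Finset.mul_sum]
      refine Finset.sum_congr rfl fun r hr => ?_
      rw [hshift r (by have := (Finset.mem_Ico.1 hr).2; omega)]
      ring
    have hV : vlam d p lam (q d (z + 1) - 1) = X * vlam d p lam (q d z - 1) := by
      simpa [hd.q_zero] using hshift 0 (Nat.zero_le z)
    rw [Finset.sum_Ico_succ_top (by omega), hsum, Nat.sub_self, vlam_zero, hV,
      Finset.prod_Icc_succ_top (by omega : 1 ≤ z + 2)]
    linear_combination X * ih + (∏ j ∈ Icc 1 (z + 1), (p j : ℂ)) * hX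

theorem tsum_s_mul_vlam (n : ℕ) :
    ∑' m, (s d p n m : ℂ) * vlam d p lam m = lam * vlam d p lam n := by
  obtain ⟨z, hz⟩ : ∃ z, zeta d n = z + 1 := ⟨zeta d n - 1, by have := (hd.zeta_mem n).1; omega⟩
  obtain ⟨hmod, hdig⟩ := (hd.zeta_eq_succ_iff n z).1 hz
  have hlt := hd.digit_lt n z
  have hdiv := Nat.div_add_mod n (q d (z + 1))
  rw [mod_q_succ, hmod, mul_comm (q d z)] at hdiv
  generalize digit d n (z + 1) = e at hdiv hlt hdig
  set n₁ := q d (z + 1) * (n / q d (z + 1))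
  have hn : n = n₁ + (e * q d z + (q d z - 1)) := by omega
  have hsplit : ∀ e' < d (z + 1), ∀ a < q d z, vlam d p lam (n₁ + (e' * q d z + a))
      = vlam d p lam n₁ * iota d p lam (z + 1) ^ e' * vlam d p lam a := fun e' he' a ha => by
    rw [hd.vlam_add lam (mul_q_add_lt he' ha) (dvd_mul_right _ _),
      hd.vlam_mul_q_add lam he' ha, mul_assoc]
  set K := vlam d p lam n₁ * iota d p lam (z + 1) ^ e
  have hq := hd.q_pos z
  have hv : vlam d p lam n = K * vlam d p lam (q d z - 1) := by
    rw [congrArg (vlam d p lam) hn, hsplit e (by omega) _ (by omega)]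
  have hv1 : vlam d p lam (n + 1) = K * iota d p lam (z + 1) := by
    rw [show n + 1 = n₁ + ((e + 1) * q d z + 0) by rw [Nat.succ_mul]; omega,
      hsplit (e + 1) (by omega) 0 hq, vlam_zero, pow_succ]
    ring
  have hsum : ∑ r ∈ Ico 1 (z + 1), (1 - (p (r + 1) : ℂ)) * (∏ j ∈ Icc 1 r, (p j : ℂ))
        * vlam d p lam (n - (q d r - 1))
      = K * ∑ r ∈ Ico 1 (z + 1), (1 - (p (r + 1) : ℂ)) * (∏ j ∈ Icc 1 r, (p j : ℂ))
        * vlam d p lam (q d z - q d r) := by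
    rw [Finset.mul_sum]
    refine Finset.sum_congr rfl fun r hr => ?_
    have := hd.q_pos r
    have := hd.q_strictMono.monotone (Nat.lt_succ_iff.1 (Finset.mem_Ico.1 hr).2)
    rw [show n - (q d r - 1) = n₁ + (e * q d z + (q d z - q d r)) by omega,
      hsplit e (by omega) _ (by omega)]
    ring
  rw [hd.tsum_s_mul p, hz, hv1, hv, hsum]
  linear_combination -K * hd.lam_mul_vlam_q_sub_one lam hp z

end IsCantorBase

end Eigenvector

section Truncation

namespace IsCantorBase

variable {d : ℕ → ℕ} (hd : IsCantorBase d) {p : ℕ → ℝ} (lam : ℂ) {k : ℕ} {w : ℕ → ℂ}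
  (hlt : ∀ m < q d k, w m = vlam d p lam m) (hge : ∀ m, q d k ≤ m → w m = 0)
include hd hlt

lemma tsum_s_mul_trunc_of_lt (hp : ∀ j, 1 ≤ j → p j ∈ Set.Ioc (0 : ℝ) 1) {n : ℕ}
    (hn : n + 1 < q d k) : ∑' m, (s d p n m : ℂ) * w m = lam * w n := by
  rw [hd.tsum_s_mul_eq_sum_range, Finset.sum_congr rfl fun m hm => by
      rw [hlt m (by simp at hm; omega)],
    ← hd.tsum_s_mul_eq_sum_range, hd.tsum_s_mul_vlam lam hp, hlt n (by omega)]

include hge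

lemma tsum_s_mul_trunc_q_sub_one (hp : ∀ j, 1 ≤ j → p j ∈ Set.Ioc (0 : ℝ) 1) :
    ∑' m, (s d p (q d k - 1) m : ℂ) * w m
      = lam * w (q d k - 1) - (∏ j ∈ Icc 1 (k + 1), (p j : ℂ)) * iota d p lam (k + 1) := by
  have hq := hd.q_pos k
  have hrow := hd.tsum_s_mul_vlam lam hp (q d k - 1)
  rw [hd.tsum_s_mul_eq_sum_range, Finset.sum_range_succ, Nat.sub_add_cancel hq] at hrow ⊢
  rw [hge _ le_rfl, mul_zero, add_zero, Finset.sum_congr rfl fun m hm => by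
      rw [hlt m (by simp at hm; omega)], hlt _ (by omega)]
  have hs := s_succ (d := d) p (q d k - 1)
  rw [Nat.sub_add_cancel hq, hd.zeta_q_sub_one] at hs
  have hv : vlam d p lam (q d k) = iota d p lam (k + 1) := by
    simpa [vlam_zero] using
      hd.vlam_mul_q_add lam (e := 1) (by linarith [hd.two_le (k + 1) (by omega)]) hq
  rw [hs, hv] at hrow
  push_cast at hrow
  linear_combination hrow

lemma tsum_s_mul_trunc_of_le {n : ℕ} (hn : q d k ≤ n) :
    ∑' m, (s d p n m : ℂ) * w m = s d p n 0 := by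
  rw [tsum_eq_single 0 fun m hm => ?_, hlt 0 (hd.q_pos k), vlam_zero, mul_one]
  rcases lt_or_ge m (q d k) with hmk | hmk
  · rw [hd.s_eq_zero_of_lt_q p (Nat.pos_of_ne_zero hm) hmk hn, Complex.ofReal_zero, zero_mul]
  · rw [hge m hmk, mul_zero]

end IsCantorBase

lemma IsCantorBase.norm_sub_smul_trunc_le {d : ℕ → ℕ} (hd : IsCantorBase d) {p : ℕ → ℝ}
    (hp : ∀ j, 1 ≤ j → p j ∈ Set.Ioc (0 : ℝ) 1) {α : ℝ≥0∞} [Fact (1 ≤ α)]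
    (T : lp (fun _ : ℕ => ℂ) α →L[ℂ] lp (fun _ : ℕ => ℂ) α)
    (hT : ∀ (w : lp (fun _ : ℕ => ℂ) α) (n : ℕ), T w n = ∑' m : ℕ, (s d p n m : ℂ) * w m)
    (lam : ℂ) {k : ℕ} {w : lp (fun _ : ℕ => ℂ) α} (hlt : ∀ m < q d k, w m = vlam d p lam m)
    (hge : ∀ m, q d k ≤ m → w m = 0) :
    ‖T w - lam • w‖ ≤ ‖T (lp.single α 0 1)‖ + (‖ftil d p k lam‖ + 1) := by
  have hα : 0 < α := zero_lt_one.trans_le Fact.out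
  set b := (∏ j ∈ Icc 1 (k + 1), (p j : ℂ)) * iota d p lam (k + 1)
  set e := lp.single (E := fun _ : ℕ => ℂ) α (q d k - 1) 1
  -- the defect is `-b` at `q d k - 1`, vanishes below it, and agrees with `T e₀` above it
  have hrest : ‖T w - lam • w + b • e‖ ≤ ‖T (lp.single α 0 1)‖ := by
    refine lp.norm_mono hα.ne' fun n => ?_
    simp only [e, lp.coeFn_add, lp.coeFn_sub, lp.coeFn_smul, Pi.add_apply, Pi.sub_apply,
      Pi.smul_apply, smul_eq_mul, lp.single_apply, Pi.single_apply, hT]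
    rcases lt_or_ge (n + 1) (q d k) with hn | hn
    · rw [hd.tsum_s_mul_trunc_of_lt lam hlt hp hn, if_neg (show n ≠ q d k - 1 by omega)]
      simp
    rcases eq_or_lt_of_le hn with hn | hn
    · rw [show n = q d k - 1 by omega, hd.tsum_s_mul_trunc_q_sub_one lam hlt hge hp, if_pos rfl]
      simp [b]
    · have hkn : q d k ≤ n := by omega
      rw [hd.tsum_s_mul_trunc_of_le lam hlt hge hkn, if_neg (by have := hd.q_pos k; omega),
        hge n hkn, tsum_eq_single 0 fun m hm => by rw [if_neg hm, mul_zero]]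
      simp
  calc ‖T w - lam • w‖ = ‖(T w - lam • w + b • e) - b • e‖ := by rw [add_sub_cancel_right]
    _ ≤ ‖T w - lam • w + b • e‖ + ‖b • e‖ := norm_sub_le _ _
    _ ≤ ‖T (lp.single α 0 1)‖ + (‖ftil d p k lam‖ + 1) := by
      refine add_le_add hrest ?_
      rw [norm_smul, lp.norm_single hα, norm_one, mul_one]
      exact norm_prod_mul_iota_le lam hp k

end Truncation

/-- every `λ ∈ E` which is not an eigenvalue of `S` on `l^α`
belongs to the approximate point spectrum of `S` on `l^α`. -/
theorem stmt8 (d : ℕ → ℕ) (p : ℕ → ℝ)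
    (hd0 : d 0 = 1) (hd : ∀ j, 1 ≤ j → 2 ≤ d j)
    (hp : ∀ j, 1 ≤ j → p j ∈ Set.Ioc (0 : ℝ) 1)
    (α : ℝ≥0∞) [Fact (1 ≤ α)] (hα : α ≠ ⊤)
    (Ta : lp (fun _ : ℕ => ℂ) α →L[ℂ] lp (fun _ : ℕ => ℂ) α)
    (hTa : ∀ (w : lp (fun _ : ℕ => ℂ) α) (n : ℕ),
      Ta w n = ∑' m : ℕ, (s d p n m : ℂ) * w m)
    (lam : ℂ) (hlam : lam ∈ E d p)
    (hnot : ¬ ∃ v : lp (fun _ : ℕ => ℂ) α, v ≠ 0 ∧ Ta v = lam • v) :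
    ∃ u : ℕ → lp (fun _ : ℕ => ℂ) α, (∀ k, ‖u k‖ = 1) ∧
      Filter.Tendsto (fun k => ‖Ta (u k) - lam • u k‖) Filter.atTop (nhds 0) := by
  have hbase : IsCantorBase d := ⟨hd0, hd⟩
  obtain ⟨M, hM⟩ := exists_forall_norm_le_of_limsup_lt_top hlam
  have hv : ¬ Memℓp (vlam d p lam) α := fun hv => hnot
    ⟨⟨vlam d p lam, hv⟩, fun h => by simpa [vlam_zero] using congrArg (fun x => x 0) h,
      lp.ext <| funext fun n => by simp [hTa, hbase.tsum_s_mul_vlam lam hp n]⟩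
  let W k := ∑ i ∈ range (q d k), lp.single α i (vlam d p lam i)
  have hW : ∀ k m, W k m = if m < q d k then vlam d p lam m else 0 := fun k m => by
    simp only [W, lp.coeFn_sum, lp.coeFn_single]
    rw [Finset.sum_apply]
    simp [Pi.single_apply]
  refine exists_norm_eq_one_tendsto_norm_sub_smul Ta lam (w := W)
    ((tendsto_norm_sum_single_atTop hα hv).comp hbase.q_strictMono.tendsto_atTop)
    (C := ‖Ta (lp.single α 0 1)‖ + (M + 1)) fun k => ?_
  refine (hbase.norm_sub_smul_trunc_le hp Ta hTa lam (fun m hm => ?_) fun m hm => ?_).trans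
    (by linarith [hM k])
  · rw [hW, if_pos hm]
  · rw [hW, if_neg (by omega)]

end AMFC
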